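/- arXiv:1510.01123 — 3 statements merged into one kernel-verified Lean document; each statement's English description precedes it below -/
import Mathlib

section
/- Let γ ∈ [0,1] and for x ∈ ℝ³ let σ(x) = |x|^{1+γ/2}(I₃ - xx*/|x|²) (σ(0)=0). Then for all x, y ∈ ℝ³: ‖σ(x) - σ(y)‖² ≤ 2|x|^{2+γ} + 2|y|^{2+γ} - 4(|x||y|)^{γ/2}(x·y). -/
/-!
Write `P_x = I - x xᵀ / |x|²` for the projection onto `x^⊥`. Expanding the square reduces the
claim to `‖σ(x)‖² = 2|x|^{2+γ}` and to the lower bound `Tr(σ(x) σ(y)ᵀ) ≥ 2(|x||y|)^{γ/2} (x·y)`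
on the cross term. For `x, y ≠ 0`, `Tr(P_x P_y) = 1 + (x·y)² / (|x|²|y|²)`, so with
`p = |x||y|` and `s = x·y` the cross term equals `p^{γ/2} (p + s²/p)`, and `p + s²/p ≥ 2s`.
-/

noncomputable section
open Matrix
open scoped Classical

abbrev E3 := EuclideanSpace ℝ (Fin 3)
abbrev M3 := Matrix (Fin 3) (Fin 3) ℝ

def proj3 (x : E3) : M3 :=
  1 - (‖x‖ ^ 2)⁻¹ • Matrix.vecMulVec (fun i => x i) (fun i => x i)

def sigmat (γ : ℝ) (v : E3) : M3 := if v = 0 then 0 else (‖v‖ ^ (1 + γ / 2)) • proj3 v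

def frobSq (A : M3) : ℝ := Matrix.trace (A * Aᵀ)

open scoped RealInnerProductSpace

lemma trace_sub_mul_transpose_sub {n R : Type*} [Fintype n] [CommRing R] (A B : Matrix n n R) :
    trace ((A - B) * (A - B)ᵀ) = trace (A * Aᵀ) + trace (B * Bᵀ) - 2 * trace (A * Bᵀ) := by
  have hBA : trace (B * Aᵀ) = trace (A * Bᵀ) := by
    rw [← trace_transpose, transpose_mul, transpose_transpose]
  rw [transpose_sub, sub_mul, mul_sub, mul_sub, trace_sub, trace_sub, trace_sub, hBA]
  ring

lemma two_mul_le_add_sq_div {P : ℝ} (hP : 0 < P) (s : ℝ) : 2 * s ≤ P + s ^ 2 / P := by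
  rw [← sub_nonneg, show P + s ^ 2 / P - 2 * s = (P - s) ^ 2 / P by field_simp; ring]
  positivity

lemma dotProduct_eq_inner (x y : E3) : (fun i => x i) ⬝ᵥ (fun i => y i) = ⟪x, y⟫ := by
  rw [EuclideanSpace.inner_eq_star_dotProduct, dotProduct_comm]; rfl

lemma proj3_transpose (x : E3) : (proj3 x)ᵀ = proj3 x := by
  simp [proj3]

lemma trace_proj3_mul_proj3 {x y : E3} (hx : x ≠ 0) (hy : y ≠ 0) :
    trace (proj3 x * proj3 y) = 1 + ⟪x, y⟫ ^ 2 / (‖x‖ ^ 2 * ‖y‖ ^ 2) := by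
  simp only [proj3, sub_mul, mul_sub, one_mul, mul_one, Matrix.smul_mul, Matrix.mul_smul,
    vecMulVec_mul_vecMulVec, trace_sub, trace_smul, trace_one, trace_vecMulVec, dotProduct_smul,
    dotProduct_eq_inner, real_inner_self_eq_norm_sq, smul_eq_mul, Fintype.card_fin]
  have := norm_ne_zero_iff.mpr hx
  have := norm_ne_zero_iff.mpr hy
  field_simp
  ring

lemma trace_sigmat_mul_transpose (γ : ℝ) {x y : E3} (hx : x ≠ 0) (hy : y ≠ 0) :
    trace (sigmat γ x * (sigmat γ y)ᵀ)
      = (‖x‖ * ‖y‖) ^ (γ / 2) * (‖x‖ * ‖y‖ + ⟪x, y⟫ ^ 2 / (‖x‖ * ‖y‖)) := by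
  have hX := norm_pos_iff.mpr hx
  have hY := norm_pos_iff.mpr hy
  have hpow : ‖x‖ ^ (1 + γ / 2) * ‖y‖ ^ (1 + γ / 2) = (‖x‖ * ‖y‖) ^ (γ / 2) * (‖x‖ * ‖y‖) := by
    rw [← Real.mul_rpow hX.le hY.le, add_comm, Real.rpow_add_one (by positivity)]
  rw [sigmat, sigmat, if_neg hx, if_neg hy, transpose_smul, proj3_transpose, Matrix.smul_mul,
    Matrix.mul_smul, smul_smul, trace_smul, trace_proj3_mul_proj3 hx hy, smul_eq_mul, hpow]
  field_simp

lemma frobSq_sigmat {γ : ℝ} (hγ : 2 + γ ≠ 0) (v : E3) :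
    frobSq (sigmat γ v) = 2 * ‖v‖ ^ (2 + γ) := by
  rcases eq_or_ne v 0 with rfl | hv
  · simp [frobSq, sigmat, Real.zero_rpow hγ]
  have hV := norm_pos_iff.mpr hv
  rw [frobSq, trace_sigmat_mul_transpose γ hv hv, real_inner_self_eq_norm_sq,
    Real.mul_rpow hV.le hV.le, ← Real.rpow_add hV, add_halves, Real.rpow_add hV, Real.rpow_two]
  field_simp
  ring

lemma two_mul_rpow_mul_inner_le_trace_sigmat (γ : ℝ) (x y : E3) :
    2 * (‖x‖ * ‖y‖) ^ (γ / 2) * ⟪x, y⟫ ≤ trace (sigmat γ x * (sigmat γ y)ᵀ) := by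
  rcases eq_or_ne x 0 with rfl | hx
  · simp [sigmat]
  rcases eq_or_ne y 0 with rfl | hy
  · simp [sigmat]
  have hP : 0 < ‖x‖ * ‖y‖ := mul_pos (norm_pos_iff.mpr hx) (norm_pos_iff.mpr hy)
  rw [trace_sigmat_mul_transpose γ hx hy]
  linarith [mul_le_mul_of_nonneg_left (two_mul_le_add_sq_div hP ⟪x, y⟫)
    (Real.rpow_nonneg hP.le (γ / 2))]

theorem sigma_diff_bound (γ : ℝ) (hγ : γ ∈ Set.Icc (0:ℝ) 1) (x y : E3) :
    frobSq (sigmat γ x - sigmat γ y)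
      ≤ 2 * ‖x‖ ^ (2 + γ) + 2 * ‖y‖ ^ (2 + γ)
        - 4 * (‖x‖ * ‖y‖) ^ (γ / 2) * (inner ℝ x y : ℝ) := by
  have h2γ : 2 + γ ≠ 0 := by linarith [hγ.1]
  rw [frobSq, trace_sub_mul_transpose_sub, ← frobSq, ← frobSq, frobSq_sigmat h2γ,
    frobSq_sigmat h2γ]
  linarith [two_mul_rpow_mul_inner_le_trace_sigmat γ x y]
end
end

section
/- Let m be a probability measure on a measurable space F and σ₁, σ₂ : F → M₃(ℝ) measurable with Σᵢ = ∫_F σᵢ(x) σᵢ(x)* m(dx) invertible for i = 1, 2. Let U(Σ₁,Σ₂) = Σ₂^{-1/2} Σ₁^{-1/2} (Σ₁^{1/2} Σ₂ Σ₁^{1/2})^{1/2}. Then U(Σ₁,Σ₂) is orthogonal and ‖Σ₁^{1/2} - Σ₂^{1/2} U(Σ₁,Σ₂)‖² ≤ ∫_F ‖σ₁(x) - σ₂(x)‖² m(dx). -/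
noncomputable section
open Matrix MeasureTheory

section
open scoped ComplexOrder

def Matrix.PosSemidef.sqrt {n 𝕜 : Type*} [Fintype n] [RCLike 𝕜] [DecidableEq n]
    {A : Matrix n n 𝕜} (hA : A.PosSemidef) : Matrix n n 𝕜 :=
  hA.1.eigenvectorUnitary.1 * diagonal ((↑) ∘ (√·) ∘ hA.1.eigenvalues) *
  (star hA.1.eigenvectorUnitary : Matrix n n 𝕜)

end

/-
Write A = Σ₁^{1/2}, B = Σ₂^{1/2} and P = (A Σ₂ A)^{1/2}. Since P² = A Σ₂ A, the matrix
U = B⁻¹ A⁻¹ P is orthogonal, and B U = A⁻¹ P gives ‖A - B U‖² = tr Σ₁ + tr Σ₂ - 2 tr P.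
For the lower bound take T = A⁻¹ P A⁻¹, the linear map pushing N(0, Σ₁) to N(0, Σ₂)
(T Σ₁ T = Σ₂): then tr (T Σ₁) = tr (T⁻¹ Σ₂) = tr P. Expanding ‖T^{1/2} s - T^{-1/2} t‖² ≥ 0 gives
2 tr (s tᵀ) ≤ tr (T s sᵀ) + tr (T⁻¹ t tᵀ), and integrating this along (σ₁, σ₂) yields
∫ ‖σ₁ - σ₂‖² ≥ tr Σ₁ + tr Σ₂ - tr (T Σ₁) - tr (T⁻¹ Σ₂) = tr Σ₁ + tr Σ₂ - 2 tr P.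
-/

namespace Matrix

section Sqrt

open scoped ComplexOrder

variable {n 𝕜 : Type*} [Fintype n] [RCLike 𝕜] [DecidableEq n] {A : Matrix n n 𝕜}

lemma PosSemidef.posSemidef_sqrt (hA : A.PosSemidef) : hA.sqrt.PosSemidef := by
  have h : (diagonal ((↑) ∘ (√·) ∘ hA.1.eigenvalues) : Matrix n n 𝕜).PosSemidef :=
    PosSemidef.diagonal fun _ ↦ RCLike.ofReal_nonneg.mpr (Real.sqrt_nonneg _)
  simpa [PosSemidef.sqrt, star_eq_conjTranspose] using
    h.mul_mul_conjTranspose_same (hA.1.eigenvectorUnitary : Matrix n n 𝕜)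

lemma PosSemidef.sqrt_mul_self (hA : A.PosSemidef) : hA.sqrt * hA.sqrt = A := by
  set C : Matrix n n 𝕜 := hA.1.eigenvectorUnitary.1
  set E := diagonal ((↑) ∘ Real.sqrt ∘ hA.1.eigenvalues : n → 𝕜)
  have hCC : star C * C = 1 := by simp [C]
  have hEE : E * E = diagonal ((↑) ∘ hA.1.eigenvalues) := by
    rw [diagonal_mul_diagonal]
    congr! with i
    simp [← pow_two, ← RCLike.ofReal_pow, Real.sq_sqrt (hA.eigenvalues_nonneg i)]
  calc hA.sqrt * hA.sqrt = C * (E * (star C * C) * E) * star C := by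
        simp only [PosSemidef.sqrt, mul_assoc]; rfl
    _ = A := by
        rw [hCC, mul_one, hEE]
        exact hA.1.spectral_theorem.symm

lemma PosDef.posDef_sqrt (hA : A.PosDef) : hA.posSemidef.sqrt.PosDef :=
  hA.posSemidef.posSemidef_sqrt.posDef_iff_isUnit.mpr <|
    isUnit_of_mul_isUnit_left (hA.posSemidef.sqrt_mul_self ▸ hA.isUnit)

end Sqrt

section Real

variable {n : Type*} {A B C M P S T : Matrix n n ℝ}

lemma PosDef.transpose_eq_self (hA : A.PosDef) : Aᵀ = A :=
  (isHermitian_iff_isSymm.mp hA.isHermitian).eq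

variable [Fintype n]

lemma trace_mul_eq_sum (W M : Matrix n n ℝ) : trace (W * M) = ∑ i, ∑ j, W i j * M j i := by
  simp [trace, mul_apply]

variable [DecidableEq n]

lemma PosDef.isUnit_det (hA : A.PosDef) : IsUnit A.det :=
  hA.det_pos.ne'.isUnit

lemma PosDef.mul_mul_same_of_posDef (hM : M.PosDef) (hC : C.PosDef) : (C * M * C).PosDef := by
  simpa [star_eq_conjTranspose, hC.transpose_eq_self] using
    hC.isUnit.posDef_star_left_conjugate_iff.mpr hM

lemma inv_mul_inv_mul_mem_orthogonalGroup (hA : A.PosDef) (hB : B.PosDef) (hP : P.PosDef)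
    (hBB : B * B = S) (hPP : P * P = A * S * A) :
    B⁻¹ * A⁻¹ * P ∈ orthogonalGroup n ℝ := by
  rw [mem_orthogonalGroup_iff]
  have := hA.isUnit.invertible
  have := hB.isUnit.invertible
  rw [transpose_mul, transpose_mul, hP.transpose_eq_self, hA.inv.transpose_eq_self,
    hB.inv.transpose_eq_self]
  calc B⁻¹ * A⁻¹ * P * (P * (A⁻¹ * B⁻¹))
      = B⁻¹ * (A⁻¹ * (A * (B * B) * A) * A⁻¹) * B⁻¹ := by rw [hBB, ← hPP]; simp only [mul_assoc]
    _ = 1 := by simp [mul_assoc]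

lemma trace_sub_inv_mul_mul_transpose (hA : A.PosDef) (hP : P.PosDef) (hPP : P * P = A * S * A) :
    trace ((A - A⁻¹ * P) * (A - A⁻¹ * P)ᵀ) = trace (A * A) + trace S - 2 * trace P := by
  have := hA.isUnit.invertible
  have hS : A⁻¹ * P * P * A⁻¹ = S := by
    rw [mul_assoc A⁻¹, hPP]
    simp [mul_assoc]
  rw [transpose_sub, transpose_mul, hA.transpose_eq_self, hP.transpose_eq_self,
    hA.inv.transpose_eq_self]
  simp only [sub_mul, mul_sub, trace_sub]
  rw [← mul_assoc, trace_conj hA.isUnit, ← mul_assoc, trace_conj' hA.isUnit, ← hS]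
  ring

lemma trace_inv_mul_mul_inv_mul_mul_self (hA : A.PosDef) :
    trace (A⁻¹ * P * A⁻¹ * (A * A)) = trace P := by
  have := hA.isUnit.invertible
  rw [← mul_assoc, inv_mul_cancel_right_of_invertible, trace_conj' hA.isUnit]

lemma trace_inv_mul_mul_inv_inv_mul (hA : A.PosDef) (hP : P.PosDef) (hPP : P * P = A * S * A) :
    trace ((A⁻¹ * P * A⁻¹)⁻¹ * S) = trace P := by
  have := hA.isUnit.invertible
  have := hP.isUnit.invertible
  rw [mul_inv_rev, mul_inv_rev, inv_inv_of_invertible, mul_assoc, trace_mul_comm, mul_assoc,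
    mul_assoc, ← mul_assoc A, ← hPP, inv_mul_cancel_left_of_invertible]

lemma PosDef.two_mul_trace_mul_transpose_le {k : Type*} [Fintype k] (hT : T.PosDef)
    (s t : Matrix n k ℝ) :
    2 * trace (s * tᵀ) ≤ trace (T * (s * sᵀ)) + trace (T⁻¹ * (t * tᵀ)) := by
  set C := hT.posSemidef.sqrt
  have hC : C.PosDef := hT.posDef_sqrt
  have hCC : C * C = T := hT.posSemidef.sqrt_mul_self
  have hCC' : C⁻¹ * C⁻¹ = T⁻¹ := by rw [← mul_inv_rev, hCC]
  have hnonneg : 0 ≤ trace ((C * s - C⁻¹ * t) * (C * s - C⁻¹ * t)ᵀ) := by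
    simpa using (posSemidef_self_mul_conjTranspose (C * s - C⁻¹ * t)).trace_nonneg
  rw [transpose_sub, transpose_mul, transpose_mul, hC.transpose_eq_self,
    hC.inv.transpose_eq_self] at hnonneg
  simp only [Matrix.sub_mul, Matrix.mul_sub, trace_sub] at hnonneg
  have hsquare (X : Matrix n n ℝ) (u : Matrix n k ℝ) :
      trace (X * u * (uᵀ * X)) = trace (X * X * (u * uᵀ)) := by
    rw [← Matrix.mul_assoc, Matrix.mul_assoc X, trace_mul_comm, ← Matrix.mul_assoc,
      Matrix.mul_assoc X]
  have hcross (X Y : Matrix n n ℝ) (u v : Matrix n k ℝ) (hYX : Y * X = 1) :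
      trace (X * u * (vᵀ * Y)) = trace (u * vᵀ) := by
    rw [← Matrix.mul_assoc, Matrix.mul_assoc X, trace_mul_comm, ← Matrix.mul_assoc, hYX,
      Matrix.one_mul]
  rw [hsquare, hsquare, hCC, hCC', hcross _ _ _ _ (mul_nonsing_inv _ hC.isUnit_det),
    hcross _ _ _ _ (nonsing_inv_mul _ hC.isUnit_det), ← trace_transpose (t * sᵀ), transpose_mul,
    transpose_transpose] at hnonneg
  linarith

end Real

end Matrix

section SecondMoment

variable {F n k : Type*} [MeasurableSpace F] [Fintype n] [Fintype k] {m : Measure F}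

def secondMoment (m : Measure F) (σ : F → Matrix n k ℝ) : Matrix n n ℝ :=
  of fun i j => ∫ x, (σ x * (σ x)ᵀ) i j ∂m

lemma integrable_trace_mul {g : F → Matrix n n ℝ} (hg : ∀ i j, Integrable (fun x => g x i j) m)
    (W : Matrix n n ℝ) : Integrable (fun x => trace (W * g x)) m := by
  simp only [trace_mul_eq_sum]
  exact integrable_finsetSum _ fun i _ => integrable_finsetSum _ fun j _ => (hg j i).const_mul _

lemma integral_trace_mul {g : F → Matrix n n ℝ} (hg : ∀ i j, Integrable (fun x => g x i j) m)
    (W : Matrix n n ℝ) :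
    ∫ x, trace (W * g x) ∂m = trace (W * of fun i j => ∫ x, g x i j ∂m) := by
  simp only [trace_mul_eq_sum, of_apply]
  refine (integral_finsetSum _ fun i _ => ?_).trans (Finset.sum_congr rfl fun i _ => ?_)
  · exact integrable_finsetSum _ fun j _ => (hg j i).const_mul _
  refine (integral_finsetSum _ fun j _ => ?_).trans (Finset.sum_congr rfl fun j _ => ?_)
  · exact (hg j i).const_mul _
  exact integral_const_mul _ _

variable [DecidableEq n]

lemma trace_one_sub_mul_secondMoment_add_le_integral {T : Matrix n n ℝ} (hT : T.PosDef)
    {σ₁ σ₂ : F → Matrix n k ℝ}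
    (hσ₁ : ∀ i j, Integrable (fun x => (σ₁ x * (σ₁ x)ᵀ) i j) m)
    (hσ₂ : ∀ i j, Integrable (fun x => (σ₂ x * (σ₂ x)ᵀ) i j) m)
    (hdiff : Integrable (fun x => trace ((σ₁ x - σ₂ x) * (σ₁ x - σ₂ x)ᵀ)) m) :
    trace ((1 - T) * secondMoment m σ₁) + trace ((1 - T⁻¹) * secondMoment m σ₂)
      ≤ ∫ x, trace ((σ₁ x - σ₂ x) * (σ₁ x - σ₂ x)ᵀ) ∂m := by
  have hpointwise (s t : Matrix n k ℝ) :
      trace ((1 - T) * (s * sᵀ)) + trace ((1 - T⁻¹) * (t * tᵀ)) ≤ trace ((s - t) * (s - t)ᵀ) := by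
    have := hT.two_mul_trace_mul_transpose_le s t
    simp only [transpose_sub, Matrix.sub_mul, Matrix.mul_sub, Matrix.one_mul, trace_sub]
    rw [← trace_transpose (t * sᵀ), transpose_mul, transpose_transpose]
    linarith
  rw [secondMoment, secondMoment, ← integral_trace_mul hσ₁, ← integral_trace_mul hσ₂,
    ← integral_add (integrable_trace_mul hσ₁ _) (integrable_trace_mul hσ₂ _)]
  exact integral_mono ((integrable_trace_mul hσ₁ _).add (integrable_trace_mul hσ₂ _)) hdiff
    fun x => hpointwise (σ₁ x) (σ₂ x)

end SecondMoment

theorem gaussian_optimal_coupling_general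
    {F : Type*} [MeasurableSpace F] (m : Measure F)
    (σ₁ σ₂ : F → M3)
    (hσ₁ : ∀ i j, Integrable (fun x => (σ₁ x * (σ₁ x)ᵀ) i j) m)
    (hσ₂ : ∀ i j, Integrable (fun x => (σ₂ x * (σ₂ x)ᵀ) i j) m)
    (hdiff : Integrable (fun x => frobSq (σ₁ x - σ₂ x)) m)
    (S1 S2 : M3)
    (hS1def : S1 = Matrix.of fun i j => ∫ x, (σ₁ x * (σ₁ x)ᵀ) i j ∂m)
    (hS2def : S2 = Matrix.of fun i j => ∫ x, (σ₂ x * (σ₂ x)ᵀ) i j ∂m)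
    (hS1 : S1.PosDef) (hS2 : S2.PosDef)
    (hP : (hS1.posSemidef.sqrt * S2 * hS1.posSemidef.sqrt).PosSemidef)
    (U : M3)
    (hU : U = (hS2.posSemidef.sqrt)⁻¹ * (hS1.posSemidef.sqrt)⁻¹ * hP.sqrt) :
    U * Uᵀ = 1 ∧
    frobSq (hS1.posSemidef.sqrt - hS2.posSemidef.sqrt * U)
      ≤ ∫ x, frobSq (σ₁ x - σ₂ x) ∂m := by
  set A := hS1.posSemidef.sqrt
  set B := hS2.posSemidef.sqrt
  set P := hP.sqrt
  have hA : A.PosDef := hS1.posDef_sqrt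
  have hB : B.PosDef := hS2.posDef_sqrt
  have hPpos : P.PosDef := (hS2.mul_mul_same_of_posDef hA).posDef_sqrt
  have hPP : P * P = A * S2 * A := hP.sqrt_mul_self
  have hBU : B * U = A⁻¹ * P := by
    rw [hU, mul_assoc, mul_nonsing_inv_cancel_left _ _ hB.isUnit_det]
  refine ⟨(mem_orthogonalGroup_iff _ _).mp
    (hU ▸ inv_mul_inv_mul_mem_orthogonalGroup hA hB hPpos hS2.posSemidef.sqrt_mul_self hPP), ?_⟩
  set T := A⁻¹ * P * A⁻¹
  calc frobSq (A - B * U) = trace (A * A) + trace S2 - 2 * trace P := by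
        rw [hBU]; exact trace_sub_inv_mul_mul_transpose hA hPpos hPP
    _ = trace ((1 - T) * S1) + trace ((1 - T⁻¹) * S2) := by
        rw [sub_mul, sub_mul, one_mul, one_mul, trace_sub, trace_sub,
          ← hS1.posSemidef.sqrt_mul_self, trace_inv_mul_mul_inv_mul_mul_self hA,
          trace_inv_mul_mul_inv_inv_mul hA hPpos hPP]
        ring
    _ ≤ ∫ x, frobSq (σ₁ x - σ₂ x) ∂m := by
        rw [hS1def, hS2def]
        exact trace_one_sub_mul_secondMoment_add_le_integral (hPpos.mul_mul_same_of_posDef hA.inv)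
          hσ₁ hσ₂ hdiff

theorem gaussian_optimal_coupling
    {F : Type*} [MeasurableSpace F] (m : Measure F) [IsProbabilityMeasure m]
    (σ₁ σ₂ : F → M3)
    (hσ₁ : ∀ i j, Integrable (fun x => (σ₁ x * (σ₁ x)ᵀ) i j) m)
    (hσ₂ : ∀ i j, Integrable (fun x => (σ₂ x * (σ₂ x)ᵀ) i j) m)
    (hdiff : Integrable (fun x => frobSq (σ₁ x - σ₂ x)) m)
    (S1 S2 : M3)
    (hS1def : S1 = Matrix.of fun i j => ∫ x, (σ₁ x * (σ₁ x)ᵀ) i j ∂m)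
    (hS2def : S2 = Matrix.of fun i j => ∫ x, (σ₂ x * (σ₂ x)ᵀ) i j ∂m)
    (hS1 : S1.PosDef) (hS2 : S2.PosDef)
    (hP : (hS1.posSemidef.sqrt * S2 * hS1.posSemidef.sqrt).PosSemidef)
    (U : M3)
    (hU : U = (hS2.posSemidef.sqrt)⁻¹ * (hS1.posSemidef.sqrt)⁻¹ * hP.sqrt) :
    U * Uᵀ = 1 ∧
    frobSq (hS1.posSemidef.sqrt - hS2.posSemidef.sqrt * U)
      ≤ ∫ x, frobSq (σ₁ x - σ₂ x) ∂m :=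
  gaussian_optimal_coupling_general m σ₁ σ₂ hσ₁ hσ₂ hdiff S1 S2 hS1def hS2def hS1 hS2 hP U hU
end
end

section
/- For every pair of nonzero vectors x, y ∈ ℝ³ there exists a 3×3 real matrix A(x,y) such that: (a) A(x,y) A(x,y)* = a(y) := |y|²(I₃ - yy*/|y|²); (b) Tr(σ(x) A(x,y)*) = |x||y| + x·y, where σ(x) = |x|(I₃ - xx*/|x|²); (c) (σ(x) - A(x,y)*)(x - y) = 0. -/
noncomputable section
open Matrix
open scoped Classical

/-- Maxwell molecules case (`γ = 0`): `a(v) = |v|² Π_{v⊥}`. -/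
def amat0 (v : E3) : M3 := if v = 0 then 0 else (‖v‖ ^ 2) • proj3 v

/-- Maxwell molecules case: `σ(v) = |v| Π_{v⊥}`. -/
def sigmat0 (v : E3) : M3 := if v = 0 then 0 else ‖v‖ • proj3 v

/-! Conjugation by the orthogonal matrix `P` of a linear isometry `U` transports the problem:
`amat0 (U v) = P (amat0 v) Pᵀ`, `sigmat0 (U v) = P (sigmat0 v) Pᵀ`, and norms, inner products and
traces are preserved, so a coupling matrix `A` for `(x, y)` yields the coupling matrix `P A Pᵀ` for
`(U x, U y)`. An orthonormal basis with `x = |x| e₁` and `e₃ ⊥ y` brings the pair to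
`x = (r, 0, 0)`, `y = (p, q, 0)`, where the paper's matrix reads
`[[0, -q, 0], [0, p, 0], [0, 0, |y|]]` and is checked entry by entry. -/

open Module WithLp
open scoped RealInnerProductSpace

section orthonormalBasis

variable {E : Type*} [NormedAddCommGroup E] [InnerProductSpace ℝ E] [FiniteDimensional ℝ E]

lemma exists_norm_eq_one_inner_eq_zero (hE : 2 < finrank ℝ E) (x y : E) :
    ∃ n : E, ‖n‖ = 1 ∧ ⟪x, n⟫ = 0 ∧ ⟪y, n⟫ = 0 := by
  set K := Submodule.span ℝ {x, y}
  have hK : finrank ℝ K ≤ 2 :=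
    (finrank_span_le_card ({x, y} : Set E)).trans (by simpa using Finset.card_le_two)
  have hKperp : Kᗮ ≠ ⊥ := by
    intro h
    have := K.finrank_add_finrank_orthogonal
    rw [h, finrank_bot] at this
    omega
  obtain ⟨v, hvK, hv⟩ := Submodule.exists_mem_ne_zero_of_ne_bot hKperp
  have hinner : ∀ u ∈ K, ⟪u, ‖v‖⁻¹ • v⟫ = 0 := fun u hu => by
    rw [inner_smul_right, Submodule.inner_right_of_mem_orthogonal hu hvK, mul_zero]
  exact ⟨‖v‖⁻¹ • v, norm_smul_inv_norm hv,
    hinner x (Submodule.subset_span (by simp)), hinner y (Submodule.subset_span (by simp))⟩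

lemma exists_orthonormalBasis_fin_three_extending (hE : finrank ℝ E = 3) {u n : E} (hu : ‖u‖ = 1)
    (hn : ‖n‖ = 1) (hun : ⟪u, n⟫ = 0) : ∃ b : OrthonormalBasis (Fin 3) ℝ E, b 0 = u ∧ b 2 = n := by
  have hv : Orthonormal ℝ (({0, 2} : Set (Fin 3)).domRestrict ![u, u, n]) := by
    rw [orthonormal_iff_ite]
    rintro ⟨i, hi⟩ ⟨j, hj⟩
    simp only [Set.mem_insert_iff, Set.mem_singleton_iff] at hi hj
    rcases hi with rfl | rfl <;> rcases hj with rfl | rfl <;>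
      simp [Set.domRestrict, hu, hn, hun, real_inner_comm u n]
  obtain ⟨b, hb⟩ := hv.exists_orthonormalBasis_extension_of_card_eq (by simpa using hE)
  exact ⟨b, hb 0 (by simp), hb 2 (by simp)⟩

lemma exists_orthonormalBasis_repr_eq (hE : finrank ℝ E = 3) (x y : E) :
    ∃ b : OrthonormalBasis (Fin 3) ℝ E,
      b.repr x = !₂[‖x‖, 0, 0] ∧ b.repr y = !₂[⟪b 0, y⟫, ⟪b 1, y⟫, 0] := by
  obtain ⟨n, hn, hxn, hyn⟩ := exists_norm_eq_one_inner_eq_zero (by omega) x y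
  obtain ⟨u, hu, hxu, hun⟩ : ∃ u : E, ‖u‖ = 1 ∧ x = ‖x‖ • u ∧ ⟪u, n⟫ = 0 := by
    rcases eq_or_ne x 0 with rfl | hx
    · obtain ⟨u, hu, hnu, -⟩ := exists_norm_eq_one_inner_eq_zero (by omega) n n
      exact ⟨u, hu, by simp, by rw [real_inner_comm]; exact hnu⟩
    · refine ⟨‖x‖⁻¹ • x, norm_smul_inv_norm hx, ?_, ?_⟩
      · rw [smul_smul, mul_inv_cancel₀ (norm_ne_zero_iff.2 hx), one_smul]
      · rw [inner_smul_left, hxn, mul_zero]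
  obtain ⟨b, hb0, hb2⟩ := exists_orthonormalBasis_fin_three_extending hE hu hn hun
  refine ⟨b, ?_, ?_⟩
  · ext i
    rw [b.repr_apply_apply]
    have hbx : ⟪b i, x⟫ = ‖x‖ * ⟪b i, b 0⟫ := by rw [hb0, ← inner_smul_right, ← hxu]
    rw [hbx, orthonormal_iff_ite.1 b.orthonormal]
    fin_cases i <;> simp
  · ext i
    rw [b.repr_apply_apply]
    fin_cases i <;> simp [hb2, real_inner_comm, hyn]

end orthonormalBasis

lemma amat0_eq (v : E3) : amat0 v = ‖v‖ ^ 2 • 1 - vecMulVec (ofLp v) (ofLp v) := by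
  rcases eq_or_ne v 0 with rfl | hv
  · simp [amat0]
  · rw [amat0, if_neg hv, proj3, smul_sub, smul_smul, mul_inv_cancel₀ (by positivity), one_smul]

-- Valid at `v = 0` too, because `‖0‖⁻¹ = 0`.
lemma sigmat0_eq (v : E3) : sigmat0 v = ‖v‖ • 1 - ‖v‖⁻¹ • vecMulVec (ofLp v) (ofLp v) := by
  rcases eq_or_ne v 0 with rfl | hv
  · simp [sigmat0]
  · rw [sigmat0, if_neg hv, proj3, smul_sub, smul_smul]
    congr 2
    field_simp

def IsCouplingMatrix (x y : E3) (A : M3) : Prop :=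
  A * Aᵀ = amat0 y ∧
    trace (sigmat0 x * Aᵀ) = ‖x‖ * ‖y‖ + ⟪x, y⟫ ∧
    (sigmat0 x - Aᵀ) *ᵥ ofLp (x - y) = 0

lemma norm_axis {r : ℝ} (hr : 0 ≤ r) : ‖!₂[r, 0, 0]‖ = r := by
  simp [EuclideanSpace.norm_eq, Fin.sum_univ_three, Real.sqrt_sq hr]

lemma norm_plane (p q : ℝ) : ‖!₂[p, q, 0]‖ = √(p ^ 2 + q ^ 2) := by
  simp [EuclideanSpace.norm_eq, Fin.sum_univ_three]

lemma sigmat0_axis {r : ℝ} (hr : 0 ≤ r) : sigmat0 !₂[r, 0, 0] = diagonal ![0, r, r] := by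
  have hr2 : r⁻¹ * (r * r) = r := by
    rcases eq_or_ne r 0 with rfl | hr0
    · simp
    · field_simp
  rw [sigmat0_eq, norm_axis hr]
  ext i j
  fin_cases i <;> fin_cases j <;> simp [hr2]

lemma amat0_plane (p q : ℝ) :
    amat0 !₂[p, q, 0] = !![q ^ 2, -(p * q), 0; -(p * q), p ^ 2, 0; 0, 0, p ^ 2 + q ^ 2] := by
  rw [amat0_eq, norm_plane, Real.sq_sqrt (by positivity)]
  ext i j
  fin_cases i <;> fin_cases j <;> simp <;> ring

lemma isCouplingMatrix_axis_plane {r : ℝ} (hr : 0 ≤ r) (p q : ℝ) :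
    IsCouplingMatrix !₂[r, 0, 0] !₂[p, q, 0] !![0, -q, 0; 0, p, 0; 0, 0, √(p ^ 2 + q ^ 2)] := by
  have hs : √(p ^ 2 + q ^ 2) * √(p ^ 2 + q ^ 2) = p ^ 2 + q ^ 2 :=
    Real.mul_self_sqrt (by positivity)
  rw [IsCouplingMatrix, amat0_plane, sigmat0_axis hr, norm_axis hr, norm_plane]
  refine ⟨?_, ?_, ?_⟩
  · ext i j
    fin_cases i <;> fin_cases j <;> simp [Matrix.mul_apply, Fin.sum_univ_three, hs] <;> ring
  · simp [Matrix.trace, Matrix.mul_apply, Fin.sum_univ_three, PiLp.inner_apply]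
    ring
  · ext i
    fin_cases i <;> simp [Matrix.mulVec, dotProduct, Fin.sum_univ_three]; ring

lemma LinearIsometryEquiv.exists_mem_orthogonalGroup_mulVec {ι : Type*} [Fintype ι] [DecidableEq ι]
    (U : EuclideanSpace ℝ ι ≃ₗᵢ[ℝ] EuclideanSpace ℝ ι) :
    ∃ P ∈ orthogonalGroup ι ℝ, ∀ v, ofLp (U v) = P *ᵥ ofLp v :=
  ⟨_, U.toMatrix_mem_unitaryGroup (EuclideanSpace.basisFun ι ℝ) (EuclideanSpace.basisFun ι ℝ),
    fun v => (LinearMap.toMatrix_mulVec_repr (EuclideanSpace.basisFun ι ℝ).toBasis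
      (EuclideanSpace.basisFun ι ℝ).toBasis U.toLinearMap v).symm⟩

section orthogonalGroup

variable {ι : Type*} [Fintype ι]

lemma vecMulVec_mulVec_mulVec (P : Matrix ι ι ℝ) (u v : ι → ℝ) :
    vecMulVec (P *ᵥ u) (P *ᵥ v) = P * vecMulVec u v * Pᵀ := by
  rw [mul_vecMulVec, vecMulVec_mul, vecMul_transpose]

variable [DecidableEq ι] {P : Matrix ι ι ℝ}

lemma conj_mul_conj_of_mem_orthogonalGroup (hP : P ∈ orthogonalGroup ι ℝ) (M N : Matrix ι ι ℝ) :
    P * M * Pᵀ * (P * N * Pᵀ) = P * (M * N) * Pᵀ :=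
  calc P * M * Pᵀ * (P * N * Pᵀ) = P * M * (Pᵀ * P) * N * Pᵀ := by simp only [Matrix.mul_assoc]
    _ = P * (M * N) * Pᵀ := by
      rw [(mem_orthogonalGroup_iff' _ _).1 hP, mul_one, Matrix.mul_assoc P M N]

lemma trace_conj_of_mem_orthogonalGroup (hP : P ∈ orthogonalGroup ι ℝ) (M : Matrix ι ι ℝ) :
    trace (P * M * Pᵀ) = trace M := by
  rw [trace_mul_cycle, (mem_orthogonalGroup_iff' _ _).1 hP, one_mul]

lemma conj_mulVec_mulVec_of_mem_orthogonalGroup (hP : P ∈ orthogonalGroup ι ℝ)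
    (M : Matrix ι ι ℝ) (w : ι → ℝ) : (P * M * Pᵀ) *ᵥ (P *ᵥ w) = P *ᵥ (M *ᵥ w) := by
  rw [mulVec_mulVec, Matrix.mul_assoc, (mem_orthogonalGroup_iff' _ _).1 hP, mul_one,
    ← mulVec_mulVec]

end orthogonalGroup

section isometry

variable {U : E3 ≃ₗᵢ[ℝ] E3} {P : M3} (hP : P ∈ orthogonalGroup (Fin 3) ℝ)
  (hUP : ∀ v, ofLp (U v) = P *ᵥ ofLp v)
include hP hUP

lemma amat0_map (v : E3) : amat0 (U v) = P * amat0 v * Pᵀ := by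
  rw [amat0_eq, amat0_eq, U.norm_map, hUP, vecMulVec_mulVec_mulVec, Matrix.mul_sub, Matrix.sub_mul,
    Matrix.mul_smul, Matrix.smul_mul, mul_one, (mem_orthogonalGroup_iff _ _).1 hP]

lemma sigmat0_map (v : E3) : sigmat0 (U v) = P * sigmat0 v * Pᵀ := by
  rw [sigmat0_eq, sigmat0_eq, U.norm_map, hUP, vecMulVec_mulVec_mulVec, Matrix.mul_sub,
    Matrix.sub_mul, Matrix.mul_smul, Matrix.smul_mul, mul_one, (mem_orthogonalGroup_iff _ _).1 hP,
    Matrix.mul_smul, Matrix.smul_mul]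

lemma IsCouplingMatrix.map {x y : E3} {A : M3} (h : IsCouplingMatrix x y A) :
    IsCouplingMatrix (U x) (U y) (P * A * Pᵀ) := by
  have hT : (P * A * Pᵀ)ᵀ = P * Aᵀ * Pᵀ := by
    rw [transpose_mul, transpose_mul, transpose_transpose, Matrix.mul_assoc]
  obtain ⟨ha, hb, hc⟩ := h
  refine ⟨?_, ?_, ?_⟩
  · rw [amat0_map hP hUP, hT, conj_mul_conj_of_mem_orthogonalGroup hP, ha]
  · rw [sigmat0_map hP hUP, U.norm_map, U.norm_map, U.inner_map_map, hT,
      conj_mul_conj_of_mem_orthogonalGroup hP, trace_conj_of_mem_orthogonalGroup hP, hb]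
  · rw [← map_sub, hUP, sigmat0_map hP hUP, hT, ← Matrix.sub_mul, ← Matrix.mul_sub,
      conj_mulVec_mulVec_of_mem_orthogonalGroup hP, hc, mulVec_zero]

end isometry

theorem exists_coupling_matrix_general (x y : E3) :
    ∃ A : M3,
      A * Aᵀ = amat0 y ∧
      Matrix.trace (sigmat0 x * Aᵀ) = ‖x‖ * ‖y‖ + (inner ℝ x y : ℝ) ∧
      Matrix.mulVec (sigmat0 x - Aᵀ) (fun i => (x - y) i) = 0 := by
  obtain ⟨b, hx, hy⟩ := exists_orthonormalBasis_repr_eq finrank_euclideanSpace_fin x y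
  obtain ⟨P, hP, hUP⟩ := b.repr.symm.exists_mem_orthogonalGroup_mulVec
  have h := (isCouplingMatrix_axis_plane (norm_nonneg x) ⟪b 0, y⟫ ⟪b 1, y⟫).map hP hUP
  rw [← hx, ← hy, LinearIsometryEquiv.symm_apply_apply, LinearIsometryEquiv.symm_apply_apply] at h
  exact ⟨_, h⟩

theorem exists_coupling_matrix (x y : E3) (hx : x ≠ 0) (hy : y ≠ 0) :
    ∃ A : M3,
      A * Aᵀ = amat0 y ∧
      Matrix.trace (sigmat0 x * Aᵀ) = ‖x‖ * ‖y‖ + (inner ℝ x y : ℝ) ∧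
      Matrix.mulVec (sigmat0 x - Aᵀ) (fun i => (x - y) i) = 0 :=
  exists_coupling_matrix_general x y
end
end
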